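/- arXiv:2303.07350 — 2 statements merged into one kernel-verified Lean document; each statement's English description precedes it below -/
import Mathlib

section
/- Let n ≥ 1 and 0 ≤ r ≤ n be natural numbers, α ∈ ℂ, and x_1,…,x_n, y_1,…,y_n ∈ ℂ with x_i ≠ x_j and y_i ≠ y_j for i ≠ j and x_i ≠ y_a for all i, a. Then the rational kernel function identity holds: ∑_{I ⊆ {1,…,n}, |I| = r} ∏_{i ∈ I} ( ∏_{j ∉ I} (x_i − x_j − α)/(x_i − x_j) · ∏_{a=1}^n (x_i − y_a + α)/(x_i − y_a) ) = ∑_{A ⊆ {1,…,n}, |A| = r} ∏_{a ∈ A} ( ∏_{b ∉ A} (y_a − y_b + α)/(y_a − y_b) · ∏_{i=1}^n (x_i − y_a + α)/(x_i − y_a) ). -/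
/-!
With `w = -y` the two sides are `kernelSum α x w r` and `kernelSum α w x r`, so the identity is a
symmetry under `x ↔ w`. By Cauchy's determinant formula the summand indexed by `J` is
`c * det [1 / (x'ᵢ + wⱼ)]`, where `x'` is `x` shifted by `α` on `Jᶜ` and
`c = ∏ᵢₐ (xᵢ + wₐ + α) / (Δ(x) Δ(w))` is symmetric in `x, w`. Expanding
`det [1 / (xᵢ + wⱼ) + t / (xᵢ + wⱼ + α)]` multilinearly in the columns, and likewise its transpose,
shows that `∑_I t ^ |I| * det [1 / (xᵢ + wⱼ)]` with `x` shifted by `α` on `I` is symmetric in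
`x, w`; comparing coefficients of `t ^ (n - r)` proves the identity for generic `α`, and both sides
are continuous in `α`.
-/

open Finset Matrix Function

namespace Finset

variable {ι M : Type*} [CommMonoid M] [LinearOrder ι] [Fintype ι] [LocallyFiniteOrderTop ι]
  [LocallyFiniteOrderBot ι]

theorem prod_prod_compl_singleton_eq_prod_prod_Ioi (f : ι → ι → M) :
    ∏ i, ∏ j ∈ {i}ᶜ, f i j = ∏ i, ∏ j ∈ Ioi i, f i j * f j i := by
  simp_rw [← Ioi_disjUnion_Iio, prod_disjUnion, prod_mul_distrib]
  congr 1
  exact prod_comm' (by simp [and_comm])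

theorem prod_prod_Ioi_eq_prod_prod_compl {h : ι → ι → M} (J : Finset ι)
    (h_symm : ∀ i j, h i j = h j i) (h_one : ∀ i j, i ≠ j → (i ∈ J ↔ j ∈ J) → h i j = 1) :
    ∏ i, ∏ j ∈ Ioi i, h i j = ∏ p ∈ J, ∏ q ∈ Jᶜ, h p q := by
  set g : ι → ι → M := fun i j => if i ∈ J ∧ j ∉ J then h i j else 1
  have hg : ∀ i, ∏ j ∈ {i}ᶜ, g i j = if i ∈ J then ∏ q ∈ Jᶜ, h i q else 1 := by
    intro i
    split_ifs with hi
    · rw [← prod_filter]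
      congr 1
      ext j
      simp only [mem_filter, mem_compl, mem_singleton]
      exact ⟨fun hj => hj.2.2, fun hj => ⟨fun e => hj (e ▸ hi), hi, hj⟩⟩
    · simp [g, hi]
  have hpair : ∀ i, ∀ j ∈ Ioi i, g i j * g j i = h i j := by
    intro i j hj
    have hij : i ≠ j := (mem_Ioi.1 hj).ne
    by_cases hi : i ∈ J <;> by_cases hj : j ∈ J <;> simp [g, hi, hj, h_one i j hij, h_symm j i]
  calc ∏ i, ∏ j ∈ Ioi i, h i j = ∏ i, ∏ j ∈ {i}ᶜ, g i j := by
        rw [prod_prod_compl_singleton_eq_prod_prod_Ioi]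
        exact prod_congr rfl fun i _ => (prod_congr rfl (hpair i)).symm
    _ = ∏ p ∈ J, ∏ q ∈ Jᶜ, h p q := by simp_rw [hg]; rw [prod_ite_mem, univ_inter]

end Finset

namespace Matrix

variable {ι R : Type*} [Fintype ι] [DecidableEq ι] [CommRing R]

theorem det_add_smul_eq_sum (A B : Matrix ι ι R) (t : R) :
    (A + t • B).det
      = ∑ I : Finset ι, t ^ #I * (of fun i j => if j ∈ I then B i j else A i j).det := by
  simp_rw [det_apply, mul_sum, add_apply, smul_apply, smul_eq_mul]
  rw [sum_comm]
  refine sum_congr rfl fun σ _ => ?_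
  simp_rw [add_comm (A _ _), prod_add, powerset_univ, smul_sum, of_apply, prod_ite, mul_smul_comm,
    prod_mul_distrib, prod_const]
  refine sum_congr rfl fun I _ => ?_
  rw [filter_mem_eq_inter, univ_inter, filter_not, filter_mem_eq_inter, univ_inter, mul_assoc]

end Matrix

namespace KernelFunction

variable {K : Type*} [Field K] {n : ℕ}

def shiftOn {ι : Type*} [DecidableEq ι] (I : Finset ι) (α : K) (x : ι → K) : ι → K :=
  fun i => if i ∈ I then x i + α else x i

def cauchyMatrix {ι : Type*} (u w : ι → K) : Matrix ι ι K :=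
  of fun i j => (u i + w j)⁻¹

theorem det_of_prod_compl_singleton_add (u : Fin n → K) {w : Fin n → K} (hw : Injective w) :
    (of fun i j => ∏ b ∈ {j}ᶜ, (u i + w b)).det = (vandermonde u).det * (vandermonde w).det := by
  open Polynomial in
  let p : Fin n → K[X] := fun j => ∏ b ∈ {j}ᶜ, (X + C (w b))
  have hp_deg : ∀ j, (p j).natDegree < n := fun j => by
    refine (natDegree_prod_le _ _).trans_lt ?_
    simp only [natDegree_X_add_C, sum_const, smul_eq_mul, mul_one, card_compl, card_singleton,
      Fintype.card_fin]
    have := j.pos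
    omega
  have hfactor : ∀ v : Fin n → K, (of fun i j => ∏ b ∈ {j}ᶜ, (v i + w b))
      = vandermonde v * of fun (k j : Fin n) => (p j).coeff k := fun v => by
    ext i j
    have := Polynomial.eval_eq_sum_range' (hp_deg j) (v i)
    simp only [p, Polynomial.eval_prod, Polynomial.eval_add, Polynomial.eval_X,
      Polynomial.eval_C] at this
    rw [of_apply, this, mul_apply, ← Fin.sum_univ_eq_sum_range]
    simp [vandermonde_apply, mul_comm, p]
  have hdiag : (of fun i j => ∏ b ∈ {j}ᶜ, (-w i + w b))
      = diagonal fun i => ∏ b ∈ {i}ᶜ, (w b - w i) := by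
    ext i j
    rcases eq_or_ne i j with rfl | hij
    · simp [neg_add_eq_sub]
    · rw [of_apply, diagonal_apply_ne _ hij]
      exact prod_eq_zero (mem_compl.2 (by simpa using hij)) (neg_add_cancel _)
  have hV_neg : (vandermonde (-w)).det ≠ 0 :=
    det_vandermonde_ne_zero_iff.2 (neg_injective.comp hw)
  have hcoeff : (of fun (k j : Fin n) => (p j).coeff k).det = (vandermonde w).det := by
    refine mul_left_cancel₀ hV_neg ?_
    rw [← det_mul, ← hfactor, Pi.neg_def, hdiag, det_diagonal,
      prod_prod_compl_singleton_eq_prod_prod_Ioi, det_vandermonde, det_vandermonde]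
    simp_rw [prod_mul_distrib, neg_sub_neg, mul_comm]
  rw [hfactor, det_mul, hcoeff]

theorem det_cauchyMatrix {u w : Fin n → K} (hw : Injective w) (huw : ∀ i j, u i + w j ≠ 0) :
    (cauchyMatrix u w).det
      = (vandermonde u).det * (vandermonde w).det / ∏ i, ∏ j, (u i + w j) := by
  have hcleared : (of fun i j => ∏ b ∈ {j}ᶜ, (u i + w b))
      = of fun i j => (∏ b, (u i + w b)) * cauchyMatrix u w i j := by
    ext i j
    rw [of_apply, of_apply, cauchyMatrix, of_apply, compl_singleton,
      ← mul_prod_erase univ (fun b => u i + w b) (mem_univ j), mul_comm (u i + w j), mul_assoc,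
      mul_inv_cancel₀ (huw i j), mul_one]
  rw [eq_div_iff (prod_ne_zero_iff.2 fun i _ => prod_ne_zero_iff.2 fun j _ => huw i j),
    ← det_of_prod_compl_singleton_add u hw, hcleared, det_mul_column, mul_comm]

theorem det_vandermonde_shiftOn_compl {x : Fin n → K} (hx : Injective x) (α : K)
    (J : Finset (Fin n)) :
    (vandermonde (shiftOn Jᶜ α x)).det
      = (vandermonde x).det * ∏ p ∈ J, ∏ q ∈ Jᶜ, (x p - x q - α) / (x p - x q) := by
  set x' := shiftOn Jᶜ α x
  set h : Fin n → Fin n → K := fun i j => (x' i - x' j) / (x i - x j)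
  have h_symm : ∀ i j, h i j = h j i := fun i j => by
    simp only [h]
    rw [← neg_sub (x' i), ← neg_sub (x i), neg_div_neg_eq]
  have h_one : ∀ i j, i ≠ j → (i ∈ J ↔ j ∈ J) → h i j = 1 := fun i j hij hJ => by
    have : x' i - x' j = x i - x j := by
      by_cases hi : i ∈ J
      · simp [x', shiftOn, hi, hJ.1 hi]
      · simp [x', shiftOn, hi, mt hJ.2 hi]
    simp only [h, this]
    exact div_self (sub_ne_zero.2 (hx.ne hij))
  have h_cross : ∀ p ∈ J, ∀ q ∈ Jᶜ, h p q = (x p - x q - α) / (x p - x q) := fun p hp q hq => by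
    simp [h, x', shiftOn, hp, mem_compl.1 hq, sub_sub]
  rw [← prod_congr rfl fun p hp => prod_congr rfl (h_cross p hp),
    ← prod_prod_Ioi_eq_prod_prod_compl J h_symm h_one, det_vandermonde, det_vandermonde,
    ← prod_mul_distrib]
  refine prod_congr rfl fun i _ => ?_
  rw [← prod_mul_distrib]
  refine prod_congr rfl fun j hj => ?_
  rw [h_symm, mul_div_cancel₀ _ (sub_ne_zero.2 (hx.ne (mem_Ioi.1 hj).ne'))]

theorem sum_powersetCard_eq_of_forall_sum_pow_card_mul_eq [Infinite K] {ι : Type*} [Fintype ι]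
    {f g : Finset ι → K} (h : ∀ t, ∑ I, t ^ #I * f I = ∑ I, t ^ #I * g I) (r : ℕ) :
    ∑ I ∈ powersetCard r univ, f I = ∑ I ∈ powersetCard r univ, g I := by
  open Polynomial in
  have hpoly : ∑ I, C (f I) * X ^ #I = ∑ I, C (g I) * X ^ #I :=
    funext fun t => by
      simpa only [eval_finsetSum, eval_mul, eval_C, eval_pow, eval_X, mul_comm] using h t
  have := congrArg (coeff · r) hpoly
  simpa [finsetSum_coeff, coeff_C_mul_X_pow, powersetCard_eq_filter, sum_filter, eq_comm]
    using this

theorem sum_powersetCard_compl {ι M : Type*} [Fintype ι] [DecidableEq ι] [AddCommMonoid M]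
    (f : Finset ι → M) {r : ℕ} (hr : r ≤ Fintype.card ι) :
    ∑ J ∈ powersetCard r univ, f Jᶜ = ∑ I ∈ powersetCard (Fintype.card ι - r) univ, f I := by
  refine sum_nbij' compl compl (fun J hJ => ?_) (fun I hI => ?_) (fun J _ => compl_compl J)
    (fun I _ => compl_compl I) fun J _ => rfl
  · simp_all [card_compl]
  · simp_all [card_compl, Nat.sub_sub_self hr]

theorem sum_pow_card_mul_det_cauchyMatrix_shiftOn_comm {ι : Type*} [Fintype ι] [DecidableEq ι]
    (α t : K) (x w : ι → K) :
    ∑ I : Finset ι, t ^ #I * (cauchyMatrix (shiftOn I α x) w).det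
      = ∑ I : Finset ι, t ^ #I * (cauchyMatrix (shiftOn I α w) x).det := by
  have expand : ∀ u v : ι → K,
      (cauchyMatrix u v + t • cauchyMatrix u fun j => v j + α).det
        = ∑ I : Finset ι, t ^ #I * (cauchyMatrix (shiftOn I α v) u).det := fun u v => by
    rw [det_add_smul_eq_sum]
    refine sum_congr rfl fun I _ => ?_
    rw [← det_transpose]
    congr 2
    ext i j
    simp only [transpose_apply, of_apply, cauchyMatrix, shiftOn]
    split_ifs <;> ring
  rw [← expand w x, ← expand x w, ← det_transpose]
  congr 1
  ext i j
  simp only [transpose_apply, Matrix.add_apply, Matrix.smul_apply, cauchyMatrix, of_apply,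
    smul_eq_mul]
  ring

def kernelSum (α : K) (x w : Fin n → K) (r : ℕ) : K :=
  ∑ I ∈ powersetCard r univ, ∏ i ∈ I,
    ((∏ j ∈ Iᶜ, (x i - x j - α) / (x i - x j)) * ∏ a, (x i + w a + α) / (x i + w a))

theorem kernelSum_summand_eq {α : K} {x w : Fin n → K} (hx : Injective x) (hw : Injective w)
    (hxw : ∀ i a, x i + w a ≠ 0) (hxwα : ∀ i a, x i + w a + α ≠ 0) (J : Finset (Fin n)) :
    ∏ p ∈ J, ((∏ q ∈ Jᶜ, (x p - x q - α) / (x p - x q)) * ∏ a, (x p + w a + α) / (x p + w a))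
      = (∏ i, ∏ a, (x i + w a + α)) / ((vandermonde x).det * (vandermonde w).det)
        * (cauchyMatrix (shiftOn Jᶜ α x) w).det := by
  have hshift_J : ∀ p ∈ J, ∀ a, shiftOn Jᶜ α x p + w a = x p + w a := fun p hp a => by
    simp [shiftOn, hp]
  have hshift_Jc : ∀ q ∈ Jᶜ, ∀ a, shiftOn Jᶜ α x q + w a = x q + w a + α := fun q hq a => by
    simp [shiftOn, hq, add_right_comm]
  have hshift_ne : ∀ i a, shiftOn Jᶜ α x i + w a ≠ 0 := fun i a => by
    by_cases hi : i ∈ J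
    · rw [hshift_J i hi]; exact hxw i a
    · rw [hshift_Jc i (mem_compl.2 hi)]; exact hxwα i a
  have hsplit : ∏ i, ∏ a, (shiftOn Jᶜ α x i + w a)
      = (∏ p ∈ J, ∏ a, (x p + w a)) * ∏ q ∈ Jᶜ, ∏ a, (x q + w a + α) := by
    rw [← prod_mul_prod_compl J,
      prod_congr rfl fun p hp => prod_congr rfl fun a _ => hshift_J p hp a,
      prod_congr rfl fun q hq => prod_congr rfl fun a _ => hshift_Jc q hq a]
  have hD : ∏ p ∈ J, ∏ a, (x p + w a) ≠ 0 := prod_ne_zero_iff.2 fun p _ =>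
    prod_ne_zero_iff.2 fun a _ => hxw p a
  have hN : ∏ q ∈ Jᶜ, ∏ a, (x q + w a + α) ≠ 0 := prod_ne_zero_iff.2 fun q _ =>
    prod_ne_zero_iff.2 fun a _ => hxwα q a
  have hVx : (vandermonde x).det ≠ 0 := det_vandermonde_ne_zero_iff.2 hx
  have hVw : (vandermonde w).det ≠ 0 := det_vandermonde_ne_zero_iff.2 hw
  rw [det_cauchyMatrix hw hshift_ne, det_vandermonde_shiftOn_compl hx, hsplit,
    ← prod_mul_prod_compl J fun i => ∏ a, (x i + w a + α), prod_mul_distrib]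
  simp_rw [prod_div_distrib]
  field_simp

theorem kernelSum_eq_mul_sum_det_cauchyMatrix {α : K} {x w : Fin n → K} (hx : Injective x)
    (hw : Injective w) (hxw : ∀ i a, x i + w a ≠ 0) (hxwα : ∀ i a, x i + w a + α ≠ 0) {r : ℕ}
    (hr : r ≤ n) :
    kernelSum α x w r
      = (∏ i, ∏ a, (x i + w a + α)) / ((vandermonde x).det * (vandermonde w).det)
        * ∑ I ∈ powersetCard (n - r) univ, (cauchyMatrix (shiftOn I α x) w).det := by
  have hcompl := sum_powersetCard_compl (fun I => (cauchyMatrix (shiftOn I α x) w).det)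
    (by simpa using hr)
  rw [Fintype.card_fin] at hcompl
  rw [kernelSum, ← hcompl, mul_sum]
  exact sum_congr rfl fun J _ => kernelSum_summand_eq hx hw hxw hxwα J

theorem kernelSum_comm_of_add_ne_zero [Infinite K] {α : K} {x w : Fin n → K} (hx : Injective x)
    (hw : Injective w) (hxw : ∀ i a, x i + w a ≠ 0) (hxwα : ∀ i a, x i + w a + α ≠ 0) {r : ℕ}
    (hr : r ≤ n) : kernelSum α x w r = kernelSum α w x r := by
  rw [kernelSum_eq_mul_sum_det_cauchyMatrix hx hw hxw hxwα hr,
    kernelSum_eq_mul_sum_det_cauchyMatrix hw hx (fun a i => add_comm (w a) (x i) ▸ hxw i a)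
      (fun a i => add_comm (w a) (x i) ▸ hxwα i a) hr,
    sum_powersetCard_eq_of_forall_sum_pow_card_mul_eq
      (sum_pow_card_mul_det_cauchyMatrix_shiftOn_comm α · x w), prod_comm,
    mul_comm (vandermonde x).det]
  simp_rw [add_comm (x _) (w _)]

theorem kernelSum_comm {x w : Fin n → ℂ} (hx : Injective x) (hw : Injective w)
    (hxw : ∀ i a, x i + w a ≠ 0) {r : ℕ} (hr : r ≤ n) (α : ℂ) :
    kernelSum α x w r = kernelSum α w x r := by
  have hcont : ∀ u v : Fin n → ℂ, Continuous fun α => kernelSum α u v r := fun u v => by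
    unfold kernelSum
    fun_prop
  have hgeneric : Dense {α : ℂ | ∀ i a, x i + w a + α ≠ 0} := by
    have hfinite : (Set.range fun p : Fin n × Fin n => -(x p.1 + w p.2)).Countable :=
      (Set.finite_range _).countable
    refine (hfinite.dense_compl ℂ).mono ?_
    intro α hα i a h
    exact hα ⟨(i, a), by linear_combination -h⟩
  exact congrFun ((hcont x w).ext_on hgeneric (hcont w x)
    fun α hα => kernelSum_comm_of_add_ne_zero hx hw hxw hα hr) α

end KernelFunction

theorem rational_kernel_function_identity_general (n r : ℕ) (hr : r ≤ n)
    (α : ℂ) (x y : Fin n → ℂ)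
    (hx : ∀ i j : Fin n, i ≠ j → x i ≠ x j)
    (hy : ∀ i j : Fin n, i ≠ j → y i ≠ y j)
    (hxy : ∀ i a : Fin n, x i ≠ y a) :
    ∑ I ∈ Finset.powersetCard r (Finset.univ : Finset (Fin n)),
      ∏ i ∈ I,
        ((∏ j ∈ Iᶜ, (x i - x j - α) / (x i - x j)) *
         ∏ a, (x i - y a + α) / (x i - y a))
    = ∑ A ∈ Finset.powersetCard r (Finset.univ : Finset (Fin n)),
      ∏ a ∈ A,
        ((∏ b ∈ Aᶜ, (y a - y b + α) / (y a - y b)) *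
         ∏ i, (x i - y a + α) / (x i - y a)) := by
  have hx' : Injective x := fun i j h => by_contra fun hij => hx i j hij h
  have hy' : Injective (-y) := neg_injective.comp fun i j h => by_contra fun hij => hy i j hij h
  have hxy' : ∀ i a, x i + (-y) a ≠ 0 := fun i a => by
    simpa [← sub_eq_add_neg, sub_eq_zero] using hxy i a
  convert KernelFunction.kernelSum_comm hx' hy' hxy' hr α using 1
  · simp only [KernelFunction.kernelSum, Pi.neg_apply, ← sub_eq_add_neg]
  · simp only [KernelFunction.kernelSum, Pi.neg_apply]
    refine sum_congr rfl fun A _ => prod_congr rfl fun a _ => ?_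
    congr 1 <;> refine prod_congr rfl fun b _ => ?_
    · rw [← neg_div_neg_eq]
      ring_nf
    · ring_nf

/-- The rational kernel function identity (Kajihara–Noumi, rational case `s(z) = z`). -/
theorem rational_kernel_function_identity (n r : ℕ) (hn : 1 ≤ n) (hr : r ≤ n)
    (α : ℂ) (x y : Fin n → ℂ)
    (hx : ∀ i j : Fin n, i ≠ j → x i ≠ x j)
    (hy : ∀ i j : Fin n, i ≠ j → y i ≠ y j)
    (hxy : ∀ i a : Fin n, x i ≠ y a) :
    ∑ I ∈ Finset.powersetCard r (Finset.univ : Finset (Fin n)),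
      ∏ i ∈ I,
        ((∏ j ∈ Iᶜ, (x i - x j - α) / (x i - x j)) *
         ∏ a, (x i - y a + α) / (x i - y a))
    = ∑ A ∈ Finset.powersetCard r (Finset.univ : Finset (Fin n)),
      ∏ a ∈ A,
        ((∏ b ∈ Aᶜ, (y a - y b + α) / (y a - y b)) *
         ∏ i, (x i - y a + α) / (x i - y a)) :=
  rational_kernel_function_identity_general n r hr α x y hx hy hxy
end

section
/- Let n ≥ 1 and K be natural numbers, p ∈ ℂ with 0 < |p| < 1, q, t ∈ ℂ∖{0}, and u_1,…,u_n, v_1,…,v_n nonzero complex numbers satisfying, both before and after the substitution below, the nonvanishing conditions θ(q^m; p) ≠ 0 for m ≥ 1, θ(q^m u_i/u_j; p) ≠ 0 (i ≠ j), θ(q^m v_a/v_b; p) ≠ 0 (a ≠ b), θ(q^m u_j/v_a; p) ≠ 0, for all m ∈ ℤ. Let W_K(u; v) denote the difference of the left- and right-hand sides of the elliptic duality identity, i.e. W_K(u;v) := ∑_{|k|=K} ∏_i (qt;p,q)_{k_i}/(q;p,q)_{k_i} ∏_{i≠j} (t^{−1}q^{−k_j}u_i/u_j;p,q)_{k_i}/(q^{−k_j}u_i/u_j;p,q)_{k_i}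 ∏_{a,j} (tu_j/v_a;p,q)_{k_j}/(u_j/v_a;p,q)_{k_j} − ∑_{|k|=K} ∏_a (qt;p,q)_{k_a}/(q;p,q)_{k_a} ∏_{a≠b} (t^{−1}q^{−k_a}v_a/v_b;p,q)_{k_b}/(q^{−k_a}v_a/v_b;p,q)_{k_b} ∏_{a,j} (tu_j/v_a;p,q)_{k_a}/(u_j/v_a;p,q)_{k_a}. Then W_K is quasiperiodic: for each index i, W_K(u_1,…,p·u_i,…,u_n; v) = t^{−K} · W_K(u_1,…,u_n; v), and W_K(u; v_1,…,p·v_i,…,v_n) = t^{K} · W_K(u; v_1,…,v_n). -/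
/-- The modified theta function
`θ(z;p) = ∏_{n ≥ 0} (1 − p^n z) ∏_{m > 0} (1 − p^m z⁻¹)`. -/
noncomputable def theta (z p : ℂ) : ℂ :=
  (∏' n : ℕ, (1 - p ^ n * z)) * (∏' m : ℕ, (1 - p ^ (m + 1) * z⁻¹))

/-- The elliptic Pochhammer symbol `(z; p,q)_k = ∏_{m=0}^{k-1} θ(q^m z; p)`. -/
noncomputable def ePoch (z p q : ℂ) (k : ℕ) : ℂ :=
  ∏ m ∈ Finset.range k, theta (q ^ m * z) p

/-- `W_K(u;v)`: the difference of the two sides of the elliptic duality identity. -/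
noncomputable def Wdiff (p q t : ℂ) {n : ℕ} (K : ℕ) (u v : Fin n → ℂ) : ℂ :=
  (∑ k ∈ Finset.Nat.antidiagonalTuple n K,
    ((∏ i, ePoch (q * t) p q (k i) / ePoch q p q (k i)) *
     (∏ i, ∏ j ∈ Finset.univ.filter (fun j => j ≠ i),
        ePoch (t⁻¹ * q ^ (-(k j : ℤ)) * (u i / u j)) p q (k i) /
          ePoch (q ^ (-(k j : ℤ)) * (u i / u j)) p q (k i)) *
     (∏ a, ∏ j, ePoch (t * u j / v a) p q (k j) / ePoch (u j / v a) p q (k j)))) -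
  (∑ k ∈ Finset.Nat.antidiagonalTuple n K,
    ((∏ a, ePoch (q * t) p q (k a) / ePoch q p q (k a)) *
     (∏ a, ∏ b ∈ Finset.univ.filter (fun b => b ≠ a),
        ePoch (t⁻¹ * q ^ (-(k a : ℤ)) * (v a / v b)) p q (k b) /
          ePoch (q ^ (-(k a : ℤ)) * (v a / v b)) p q (k b)) *
     (∏ a, ∏ j, ePoch (t * u j / v a) p q (k a) / ePoch (u j / v a) p q (k a))))

/-- The nonvanishing (genericity) conditions on the tuples `u`, `v`. -/
def NonVanishing (p q : ℂ) {n : ℕ} (u v : Fin n → ℂ) : Prop :=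
  (∀ i j : Fin n, i ≠ j → ∀ m : ℤ, theta (q ^ m * (u i / u j)) p ≠ 0) ∧
  (∀ a b : Fin n, a ≠ b → ∀ m : ℤ, theta (q ^ m * (v a / v b)) p ≠ 0) ∧
  (∀ j a : Fin n, ∀ m : ℤ, theta (q ^ m * (u j / v a)) p ≠ 0)

/-!
The functional equation `θ(pz; p) = -z⁻¹ θ(z; p)` gives
`(c·pz; p,q)_k / (pz; p,q)_k = c^{-k} (cz; p,q)_k / (z; p,q)_k`.
Every factor of a summand of `W_K` that involves `u` or `v` is such a quotient with `c = t^{±1}`,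
so under `u_j ↦ p^{m_j} u_j`, `v_a ↦ p^{l_a} v_a` each summand is multiplied by a power of `t`.
The exponents coming from the quotients `u_i/u_j` (resp. `v_a/v_b`) and from `u_j/v_a` cancel up
to `(∑ l - ∑ m)·|k|`, and `|k| = K` for every summand.
-/

open Finset

section Theta

variable {p : ℂ}

lemma multipliable_one_sub_pow_mul (hp : ‖p‖ < 1) (z : ℂ) :
    Multipliable fun n : ℕ => 1 - p ^ n * z := by
  have hsum : Summable fun n : ℕ => ‖-(p ^ n * z)‖ := by
    simpa [norm_mul, norm_pow] using
      (summable_geometric_of_lt_one (norm_nonneg p) hp).mul_right ‖z‖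
  simpa [sub_eq_add_neg] using multipliable_one_add_of_summable hsum

lemma theta_mul_left (hp0 : p ≠ 0) (hp1 : ‖p‖ < 1) {z : ℂ} (hz : z ≠ 0) :
    theta (p * z) p = -z⁻¹ * theta z p := by
  have shift : ∀ w : ℂ, ∏' n : ℕ, (1 - p ^ n * w) = (1 - w) * ∏' n : ℕ, (1 - p ^ (n + 1) * w) :=
    fun w => by
      simpa using tprod_eq_zero_mul' (f := fun n : ℕ => 1 - p ^ n * w)
        ((multipliable_one_sub_pow_mul hp1 (p * w)).congr fun n => by ring)
  have hpz : ∀ n : ℕ, p ^ n * (p * z) = p ^ (n + 1) * z := fun n => by ring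
  have hpz' : ∀ n : ℕ, p ^ (n + 1) * (p * z)⁻¹ = p ^ n * z⁻¹ := fun n => by
    field_simp; ring
  simp only [theta, hpz, hpz', shift z, shift z⁻¹]
  rw [show (1 : ℂ) - z⁻¹ = -z⁻¹ * (1 - z) by field_simp; ring]
  ring

end Theta

section EllipticPochhammer

variable {p q : ℂ}

lemma ePoch_mul_left (hp0 : p ≠ 0) (hp1 : ‖p‖ < 1) (hq : q ≠ 0) {z : ℂ} (hz : z ≠ 0)
    (k : ℕ) :
    ePoch (p * z) p q k = (-1) ^ k * (∏ m ∈ range k, q ^ m * z)⁻¹ * ePoch z p q k := by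
  calc ePoch (p * z) p q k = ∏ m ∈ range k, (-1) * (q ^ m * z)⁻¹ * theta (q ^ m * z) p :=
        prod_congr rfl fun m _ => by
          rw [mul_left_comm, theta_mul_left hp0 hp1 (mul_ne_zero (pow_ne_zero m hq) hz)]
          ring
    _ = _ := by
      rw [prod_mul_distrib, prod_mul_distrib, prod_const, card_range, prod_inv_distrib]; rfl

noncomputable def ePochRatio (c z p q : ℂ) (k : ℕ) : ℂ :=
  ePoch (c * z) p q k / ePoch z p q k

lemma ePochRatio_mul_left (hp0 : p ≠ 0) (hp1 : ‖p‖ < 1) (hq : q ≠ 0) {c z : ℂ} (hc : c ≠ 0)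
    (hz : z ≠ 0) (k : ℕ) :
    ePochRatio c (p * z) p q k = (c ^ k)⁻¹ * ePochRatio c z p q k := by
  have hprod : ∏ m ∈ range k, q ^ m * (c * z) = c ^ k * ∏ m ∈ range k, q ^ m * z := by
    simp_rw [mul_left_comm _ c, prod_mul_distrib, prod_const, card_range]
  have hP : ∏ m ∈ range k, q ^ m * z ≠ 0 :=
    prod_ne_zero_iff.mpr fun m _ => mul_ne_zero (pow_ne_zero m hq) hz
  rw [ePochRatio, ePochRatio, mul_left_comm, ePoch_mul_left hp0 hp1 hq (mul_ne_zero hc hz),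
    ePoch_mul_left hp0 hp1 hq hz, mul_div_mul_comm, hprod]
  congr 1
  generalize ∏ m ∈ range k, q ^ m * z = P at hP ⊢
  field_simp

lemma ePochRatio_zpow_mul (hp0 : p ≠ 0) (hp1 : ‖p‖ < 1) (hq : q ≠ 0) {c z : ℂ} (hc : c ≠ 0)
    (hz : z ≠ 0) (s : ℤ) (k : ℕ) :
    ePochRatio c (p ^ s * z) p q k = c ^ (-(s * k)) * ePochRatio c z p q k := by
  induction s using Int.induction_on with
  | zero => simp
  | succ s ih =>
    rw [zpow_add_one₀ hp0, mul_comm _ p, mul_assoc, ePochRatio_mul_left hp0 hp1 hq hc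
      (mul_ne_zero (zpow_ne_zero s hp0) hz), ih, ← mul_assoc, ← zpow_natCast, ← zpow_neg,
      ← zpow_add₀ hc]
    ring_nf
  | pred s ih =>
    have h := ePochRatio_mul_left hp0 hp1 hq hc (mul_ne_zero (zpow_ne_zero (-s - 1) hp0) hz) k
    rw [← mul_assoc, ← zpow_one_add₀ hp0, add_sub_cancel, ih, eq_inv_mul_iff_mul_eq₀
      (pow_ne_zero k hc)] at h
    rw [← h, ← mul_assoc, ← zpow_natCast, ← zpow_add₀ hc]
    ring_nf

end EllipticPochhammer

lemma prod_zpow_eq_zpow_sum {G ι : Type*} [CommGroupWithZero G] {t : G} (ht : t ≠ 0)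
    (s : Finset ι) (e : ι → ℤ) : ∏ x ∈ s, t ^ e x = t ^ ∑ x ∈ s, e x := by
  classical
  induction s using Finset.induction_on with
  | empty => simp
  | insert x s hx ih => rw [prod_insert hx, sum_insert hx, zpow_add₀ ht, ih]

lemma prod_prod_eq_zpow_sum_mul {G ι κ : Type*} [CommGroupWithZero G] {t : G} (ht : t ≠ 0)
    (s : Finset ι) (T : ι → Finset κ) {f g : ι → κ → G} (e : ι → κ → ℤ)
    (h : ∀ x ∈ s, ∀ y ∈ T x, f x y = t ^ e x y * g x y) :
    ∏ x ∈ s, ∏ y ∈ T x, f x y = t ^ (∑ x ∈ s, ∑ y ∈ T x, e x y) * ∏ x ∈ s, ∏ y ∈ T x, g x y := by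
  rw [prod_congr rfl fun x hx => prod_congr rfl (h x hx)]
  simp only [prod_mul_distrib, prod_zpow_eq_zpow_sum ht]

section DualityTerms

variable {p q t : ℂ} {n : ℕ}

noncomputable def dualityLhsTerm (p q t : ℂ) (u v : Fin n → ℂ) (k : Fin n → ℕ) : ℂ :=
  (∏ i, ePoch (q * t) p q (k i) / ePoch q p q (k i)) *
  (∏ i, ∏ j ∈ univ.filter (fun j => j ≠ i),
    ePochRatio t⁻¹ (q ^ (-(k j : ℤ)) * (u i / u j)) p q (k i)) *
  (∏ a, ∏ j, ePochRatio t (u j / v a) p q (k j))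

noncomputable def dualityRhsTerm (p q t : ℂ) (u v : Fin n → ℂ) (k : Fin n → ℕ) : ℂ :=
  (∏ a, ePoch (q * t) p q (k a) / ePoch q p q (k a)) *
  (∏ a, ∏ b ∈ univ.filter (fun b => b ≠ a),
    ePochRatio t⁻¹ (q ^ (-(k a : ℤ)) * (v a / v b)) p q (k b)) *
  (∏ a, ∏ j, ePochRatio t (u j / v a) p q (k a))

lemma Wdiff_eq_sum_sub_sum (K : ℕ) (u v : Fin n → ℂ) :
    Wdiff p q t K u v = ∑ k ∈ Nat.antidiagonalTuple n K, dualityLhsTerm p q t u v k -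
      ∑ k ∈ Nat.antidiagonalTuple n K, dualityRhsTerm p q t u v k := by
  simp only [Wdiff, dualityLhsTerm, dualityRhsTerm, ePochRatio, mul_assoc, mul_div_assoc]

lemma ePochRatio_mul_zpow_mul_div_zpow_mul (hp0 : p ≠ 0) (hp1 : ‖p‖ < 1) (hq : q ≠ 0)
    {c w x y : ℂ} (hc : c ≠ 0) (hw : w ≠ 0) (hx : x ≠ 0) (hy : y ≠ 0) (r s : ℤ) (k : ℕ) :
    ePochRatio c (w * (p ^ r * x / (p ^ s * y))) p q k =
      c ^ (-((r - s) * k)) * ePochRatio c (w * (x / y)) p q k := by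
  rw [← ePochRatio_zpow_mul hp0 hp1 hq hc (mul_ne_zero hw (div_ne_zero hx hy)), zpow_sub₀ hp0]
  congr 1
  field_simp

lemma ePochRatio_zpow_mul_div_zpow_mul (hp0 : p ≠ 0) (hp1 : ‖p‖ < 1) (hq : q ≠ 0)
    {c x y : ℂ} (hc : c ≠ 0) (hx : x ≠ 0) (hy : y ≠ 0) (r s : ℤ) (k : ℕ) :
    ePochRatio c (p ^ r * x / (p ^ s * y)) p q k =
      c ^ (-((r - s) * k)) * ePochRatio c (x / y) p q k := by
  simpa using ePochRatio_mul_zpow_mul_div_zpow_mul hp0 hp1 hq hc one_ne_zero hx hy r s k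

variable {u v : Fin n → ℂ} (m l : Fin n → ℤ) (k : Fin n → ℕ)

lemma dualityLhsTerm_zpow_mul (hp0 : p ≠ 0) (hp1 : ‖p‖ < 1) (hq : q ≠ 0) (ht : t ≠ 0)
    (hu : ∀ j, u j ≠ 0) (hv : ∀ a, v a ≠ 0) :
    dualityLhsTerm p q t (fun j => p ^ m j * u j) (fun a => p ^ l a * v a) k =
      t ^ ((∑ a, l a - ∑ j, m j) * ∑ j, (k j : ℤ)) * dualityLhsTerm p q t u v k := by
  have pair : ∀ i j, ePochRatio t⁻¹ (q ^ (-(k j : ℤ)) * (p ^ m i * u i / (p ^ m j * u j))) p q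
      (k i) = t ^ ((m i - m j) * (k i : ℤ)) *
        ePochRatio t⁻¹ (q ^ (-(k j : ℤ)) * (u i / u j)) p q (k i) := fun i j => by
    rw [ePochRatio_mul_zpow_mul_div_zpow_mul hp0 hp1 hq (inv_ne_zero ht) (zpow_ne_zero _ hq)
      (hu i) (hu j), inv_zpow', neg_neg]
  have hE : ∑ i, ∑ j ∈ univ.filter (fun j => j ≠ i), (m i - m j) * (k i : ℤ) +
      ∑ a, ∑ j, -((m j - l a) * (k j : ℤ)) = (∑ a, l a - ∑ j, m j) * ∑ j, (k j : ℤ) := by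
    have diag : ∀ i, ∑ j ∈ univ.filter (fun j => j ≠ i), (m i - m j) * (k i : ℤ) =
        ∑ j, (m i - m j) * (k i : ℤ) :=
      fun i => sum_filter_of_ne fun j _ hj => by rintro rfl; simp at hj
    rw [sum_congr rfl fun i _ => diag i]
    simp only [sub_mul, neg_sub, sum_sub_distrib, sum_const, card_univ, ← sum_mul,
      ← mul_sum, ← smul_sum]
    ring
  simp only [dualityLhsTerm]
  rw [prod_prod_eq_zpow_sum_mul ht _ _ _ fun i _ j _ => pair i j,
    prod_prod_eq_zpow_sum_mul ht _ _ _ fun a _ j _ =>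
      ePochRatio_zpow_mul_div_zpow_mul hp0 hp1 hq ht (hu j) (hv a) (m j) (l a) (k j), ← hE,
    zpow_add₀ ht]
  ring

lemma dualityRhsTerm_zpow_mul (hp0 : p ≠ 0) (hp1 : ‖p‖ < 1) (hq : q ≠ 0) (ht : t ≠ 0)
    (hu : ∀ j, u j ≠ 0) (hv : ∀ a, v a ≠ 0) :
    dualityRhsTerm p q t (fun j => p ^ m j * u j) (fun a => p ^ l a * v a) k =
      t ^ ((∑ a, l a - ∑ j, m j) * ∑ j, (k j : ℤ)) * dualityRhsTerm p q t u v k := by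
  have pair : ∀ a b, ePochRatio t⁻¹ (q ^ (-(k a : ℤ)) * (p ^ l a * v a / (p ^ l b * v b))) p q
      (k b) = t ^ ((l a - l b) * (k b : ℤ)) *
        ePochRatio t⁻¹ (q ^ (-(k a : ℤ)) * (v a / v b)) p q (k b) := fun a b => by
    rw [ePochRatio_mul_zpow_mul_div_zpow_mul hp0 hp1 hq (inv_ne_zero ht) (zpow_ne_zero _ hq)
      (hv a) (hv b), inv_zpow', neg_neg]
  have hE : ∑ a, ∑ b ∈ univ.filter (fun b => b ≠ a), (l a - l b) * (k b : ℤ) +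
      ∑ a, ∑ j, -((m j - l a) * (k a : ℤ)) = (∑ a, l a - ∑ j, m j) * ∑ j, (k j : ℤ) := by
    have diag : ∀ a, ∑ b ∈ univ.filter (fun b => b ≠ a), (l a - l b) * (k b : ℤ) =
        ∑ b, (l a - l b) * (k b : ℤ) :=
      fun a => sum_filter_of_ne fun b _ hb => by rintro rfl; simp at hb
    rw [sum_congr rfl fun a _ => diag a]
    simp only [sub_mul, neg_sub, sum_sub_distrib, sum_const, card_univ, ← sum_mul,
      ← mul_sum, ← smul_sum]
    ring
  simp only [dualityRhsTerm]
  rw [prod_prod_eq_zpow_sum_mul ht _ _ _ fun a _ b _ => pair a b,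
    prod_prod_eq_zpow_sum_mul ht _ _ _ fun a _ j _ =>
      ePochRatio_zpow_mul_div_zpow_mul hp0 hp1 hq ht (hu j) (hv a) (m j) (l a) (k a), ← hE,
    zpow_add₀ ht]
  ring

end DualityTerms

theorem Wdiff_zpow_mul {p q t : ℂ} {n : ℕ} (hp0 : p ≠ 0) (hp1 : ‖p‖ < 1) (hq : q ≠ 0)
    (ht : t ≠ 0) (K : ℕ) {u v : Fin n → ℂ} (hu : ∀ j, u j ≠ 0) (hv : ∀ a, v a ≠ 0)
    (m l : Fin n → ℤ) :
    Wdiff p q t K (fun j => p ^ m j * u j) (fun a => p ^ l a * v a) =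
      t ^ ((∑ a, l a - ∑ j, m j) * K) * Wdiff p q t K u v := by
  have hK : ∀ k ∈ Nat.antidiagonalTuple n K, ∑ j, (k j : ℤ) = K := fun k hk => by
    rw [← Nat.cast_sum, (Nat.mem_antidiagonalTuple.mp hk)]
  rw [Wdiff_eq_sum_sub_sum, Wdiff_eq_sum_sub_sum, mul_sub, mul_sum, mul_sum]
  congr 1 <;> refine sum_congr rfl fun k hk => ?_
  · rw [dualityLhsTerm_zpow_mul m l k hp0 hp1 hq ht hu hv, hK k hk]
  · rw [dualityRhsTerm_zpow_mul m l k hp0 hp1 hq ht hu hv, hK k hk]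

lemma update_mul_self_eq_zpow_single_mul {n : ℕ} (p : ℂ) (w : Fin n → ℂ) (i : Fin n) :
    Function.update w i (p * w i) = fun j => p ^ (Pi.single i 1 : Fin n → ℤ) j * w j := by
  ext j
  rcases eq_or_ne j i with rfl | h <;> simp [*]

theorem W_quasiperiodicity_general (n K : ℕ)
    (p q t : ℂ) (hp0 : p ≠ 0) (hp1 : ‖p‖ < 1)
    (hq : q ≠ 0) (ht : t ≠ 0)
    (u v : Fin n → ℂ) (hu : ∀ i, u i ≠ 0) (hv : ∀ a, v a ≠ 0) :
    ∀ i : Fin n,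
      Wdiff p q t K (Function.update u i (p * u i)) v
          = t ^ (-(K : ℤ)) * Wdiff p q t K u v ∧
      Wdiff p q t K u (Function.update v i (p * v i))
          = t ^ (K : ℤ) * Wdiff p q t K u v := by
  intro i
  constructor
  · simpa [update_mul_self_eq_zpow_single_mul] using
      Wdiff_zpow_mul hp0 hp1 hq ht K hu hv (Pi.single i 1) 0
  · simpa [update_mul_self_eq_zpow_single_mul] using
      Wdiff_zpow_mul hp0 hp1 hq ht K hu hv 0 (Pi.single i 1)

/-- Quasiperiodicity of `W_K`: replacing `u_i` by `p·u_i` multiplies `W_K` by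
`t^{-K}`, and replacing `v_i` by `p·v_i` multiplies `W_K` by `t^{K}`. -/
theorem W_quasiperiodicity (n K : ℕ) (hn : 1 ≤ n)
    (p q t : ℂ) (hp0 : p ≠ 0) (hp1 : ‖p‖ < 1)
    (hq : q ≠ 0) (ht : t ≠ 0)
    (u v : Fin n → ℂ) (hu : ∀ i, u i ≠ 0) (hv : ∀ a, v a ≠ 0)
    (hθq : ∀ m : ℕ, 1 ≤ m → theta (q ^ m) p ≠ 0)
    (hgen : NonVanishing p q u v)
    (hgenu : ∀ i : Fin n, NonVanishing p q (Function.update u i (p * u i)) v)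
    (hgenv : ∀ i : Fin n, NonVanishing p q u (Function.update v i (p * v i))) :
    ∀ i : Fin n,
      Wdiff p q t K (Function.update u i (p * u i)) v
          = t ^ (-(K : ℤ)) * Wdiff p q t K u v ∧
      Wdiff p q t K u (Function.update v i (p * v i))
          = t ^ (K : ℤ) * Wdiff p q t K u v :=
  W_quasiperiodicity_general n K p q t hp0 hp1 hq ht u v hu hv
end
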